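/- arXiv:0911.2372 — 4 statements merged into one kernel-verified Lean document; each statement's English description precedes it below -/
import Mathlib

section
/- With the Caratheodory transform as above (f* = γf, φ* = γφ, (p*)^t = γqA, (q*)^t = A^{-1}p, where A = fI - pq and γ = f^{n-2}/det A), if f + φ = tr(pq) then f* + φ* = tr(p* q*). -/
namespace Matrix

variable {m k R : Type*} [Fintype m] [DecidableEq m] [Fintype k] [CommRing R]

theorem trace_mul_eq_mul_trace_of_transpose_eq {A : Matrix m m R} (hA : IsUnit A) (γ : R)
    {p pstar : Matrix m k R} {q qstar : Matrix k m R}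
    (hp : pstarᵀ = γ • (q * A)) (hq : qstarᵀ = A⁻¹ * p) :
    (pstar * qstar).trace = γ * (p * q).trace :=
  calc (pstar * qstar).trace = (qstarᵀ * pstarᵀ).trace := by
        rw [← trace_transpose, transpose_mul]
    _ = γ * (A⁻¹ * (p * q) * A).trace := by
        rw [hp, hq, Matrix.mul_smul, trace_smul, smul_eq_mul, Matrix.mul_assoc, Matrix.mul_assoc,
          Matrix.mul_assoc]
    _ = γ * (p * q).trace := by rw [trace_conj' hA]

end Matrix

theorem caratheodory_preserves_relation_general (n ν : ℕ) (f φ : ℝ)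
    (p : Matrix (Fin n) (Fin ν) ℝ) (q : Matrix (Fin ν) (Fin n) ℝ)
    (A : Matrix (Fin n) (Fin n) ℝ)
    (hAinv : IsUnit A.det)
    (γ : ℝ)
    (fstar φstar : ℝ) (hfstar : fstar = γ * f) (hφstar : φstar = γ * φ)
    (pstar : Matrix (Fin n) (Fin ν) ℝ) (hp : pstar.transpose = γ • (q * A))
    (qstar : Matrix (Fin ν) (Fin n) ℝ) (hq : qstar.transpose = A⁻¹ * p)
    (hrel : f + φ = (p * q).trace) :
    fstar + φstar = (pstar * qstar).trace := by
  rw [Matrix.trace_mul_eq_mul_trace_of_transpose_eq (A.isUnit_iff_isUnit_det.mpr hAinv) γ hp hq,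
    hfstar, hφstar, ← mul_add, hrel]

/-- The Caratheodory transform preserves the relation `f + φ = tr (p q)`:
if `f + φ = tr (p q)` then `f* + φ* = tr (p* q*)`. -/
theorem caratheodory_preserves_relation (n ν : ℕ) (f φ : ℝ) (hf : f ≠ 0)
    (p : Matrix (Fin n) (Fin ν) ℝ) (q : Matrix (Fin ν) (Fin n) ℝ)
    (A : Matrix (Fin n) (Fin n) ℝ)
    (hA : A = f • (1 : Matrix (Fin n) (Fin n) ℝ) - p * q) (hAinv : IsUnit A.det)
    (γ : ℝ) (hγ : γ = f ^ (n - 2) / A.det)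
    (fstar φstar : ℝ) (hfstar : fstar = γ * f) (hφstar : φstar = γ * φ)
    (pstar : Matrix (Fin n) (Fin ν) ℝ) (hp : pstar.transpose = γ • (q * A))
    (qstar : Matrix (Fin ν) (Fin n) ℝ) (hq : qstar.transpose = A⁻¹ * p)
    (hrel : f + φ = (p * q).trace) :
    fstar + φstar = (pstar * qstar).trace :=
  caratheodory_preserves_relation_general n ν f φ p q A hAinv γ fstar φstar hfstar hφstar pstar hp
    qstar hq hrel
end

section
/- For the matrix A* = f*I - p*q* arising from the Caratheodory transform, one has A* = γ A^t, where A = fI - pq and γ = f^{n-2}/det A. In particular det A* = γ^n det A. -/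
/-!
`A = f • 1 - p q` commutes with `p q`, so `A⁻¹ (p q) A = p q`. Hence
`(p* q*)ᵀ = (q*)ᵀ (p*)ᵀ = γ • A⁻¹ (p q) A = γ • p q`, and
`A* = γ f • 1 - γ • (p q)ᵀ = γ • Aᵀ`.
-/

namespace Matrix

variable {m k R : Type*} [Fintype m] [DecidableEq m] [Fintype k] [CommRing R]

theorem nonsing_inv_mul_mul_self_of_commute {A B : Matrix m m R} (hA : IsUnit A.det)
    (h : Commute A B) : A⁻¹ * B * A = B := by
  rw [Matrix.mul_assoc, ← h.eq, nonsing_inv_mul_cancel_left A B hA]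

theorem smul_one_sub_mul_commute (f : R) (p : Matrix m k R) (q : Matrix k m R) :
    Commute (f • (1 : Matrix m m R) - p * q) (p * q) :=
  ((Commute.one_left _).smul_left f).sub_left (Commute.refl _)

theorem smul_one_sub_mul_eq_smul_transpose {f γ : R} {p pstar : Matrix m k R}
    {q qstar : Matrix k m R} (hA : IsUnit (f • (1 : Matrix m m R) - p * q).det)
    (hp : pstarᵀ = γ • (q * (f • 1 - p * q))) (hq : qstarᵀ = (f • 1 - p * q)⁻¹ * p) :
    (γ * f) • (1 : Matrix m m R) - pstar * qstar = γ • (f • 1 - p * q)ᵀ := by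
  have hmul : pstar * qstar = γ • (p * q)ᵀ := by
    rw [← transpose_transpose (pstar * qstar), transpose_mul, hq, hp, Matrix.mul_smul,
      ← Matrix.mul_assoc, Matrix.mul_assoc _ p q,
      nonsing_inv_mul_mul_self_of_commute hA (smul_one_sub_mul_commute f p q), transpose_smul]
  rw [hmul, transpose_sub, transpose_smul, transpose_one, smul_sub, smul_smul]

end Matrix

theorem caratheodory_Astar_eq_general (n ν : ℕ) (f : ℝ)
    (p : Matrix (Fin n) (Fin ν) ℝ) (q : Matrix (Fin ν) (Fin n) ℝ)
    (A : Matrix (Fin n) (Fin n) ℝ)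
    (hA : A = f • (1 : Matrix (Fin n) (Fin n) ℝ) - p * q) (hAinv : IsUnit A.det)
    (γ : ℝ)
    (fstar : ℝ) (hfstar : fstar = γ * f)
    (pstar : Matrix (Fin n) (Fin ν) ℝ) (hp : pstar.transpose = γ • (q * A))
    (qstar : Matrix (Fin ν) (Fin n) ℝ) (hq : qstar.transpose = A⁻¹ * p)
    (Astar : Matrix (Fin n) (Fin n) ℝ)
    (hAstar : Astar = fstar • (1 : Matrix (Fin n) (Fin n) ℝ) - pstar * qstar) :
    Astar = γ • A.transpose ∧ Astar.det = γ ^ n * A.det := by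
  subst hA hfstar hAstar
  have hAstar := Matrix.smul_one_sub_mul_eq_smul_transpose hAinv hp hq
  refine ⟨hAstar, ?_⟩
  rw [hAstar, Matrix.det_smul, Matrix.det_transpose, Fintype.card_fin]

/-- For the matrix `A* = f* I - p* q*` arising from the Caratheodory transform one has
`A* = γ Aᵀ`, and in particular `det A* = γ ^ n · det A`. -/
theorem caratheodory_Astar_eq (n ν : ℕ) (f : ℝ) (hf : f ≠ 0)
    (p : Matrix (Fin n) (Fin ν) ℝ) (q : Matrix (Fin ν) (Fin n) ℝ)
    (A : Matrix (Fin n) (Fin n) ℝ)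
    (hA : A = f • (1 : Matrix (Fin n) (Fin n) ℝ) - p * q) (hAinv : IsUnit A.det)
    (γ : ℝ) (hγ : γ = f ^ (n - 2) / A.det)
    (fstar : ℝ) (hfstar : fstar = γ * f)
    (pstar : Matrix (Fin n) (Fin ν) ℝ) (hp : pstar.transpose = γ • (q * A))
    (qstar : Matrix (Fin ν) (Fin n) ℝ) (hq : qstar.transpose = A⁻¹ * p)
    (Astar : Matrix (Fin n) (Fin n) ℝ)
    (hAstar : Astar = fstar • (1 : Matrix (Fin n) (Fin n) ℝ) - pstar * qstar) :
    Astar = γ • A.transpose ∧ Astar.det = γ ^ n * A.det :=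
  caratheodory_Astar_eq_general n ν f p q A hA hAinv γ fstar hfstar pstar hp qstar hq Astar hAstar
end

section
/- Define the Weierstrass-type function E(q) = f(q) - (1/(C(n,k) f̂^{k-1})) Σ_{|K|=k} det( f̂ I_K + (n/k) [p̂ (q - g)]_K ), where the determinant is over the k×k submatrix indexed by K of the n×n matrix f̂ δ^i_j + (n/k) Σ_α p̂^i_α (q^α_j - g^α_j), with p̂^i_α := ∂f/∂q^α_i evaluated at q = g and f̂ := f(g) ≠ 0. Then E(g) = 0 and ∂E/∂q^α_i (g) = 0 for all i, α. -/
/-!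
At `q = g` the matrix `M` is `f̂ • 1`, so each of the `C(n,k)` principal `k`-minors equals `f̂ ^ k`
and `E g = 0`. By Jacobi's formula at a scalar matrix, the derivative of a `k`-minor there is
`f̂ ^ (k-1)` times the derivative of its trace. Summing over `K`, each diagonal entry occurs in
`C(n-1,k-1)` minors, and the derivative of `M q i i` in the direction `e_{iα}` is `(n/k) p̂^i_α`.
Since `C(n-1,k-1) / C(n,k) = k/n`, the subtracted term has derivative exactly `p̂^i_α`, which is
that of `f`.
-/

open Finset

theorem Finset.sum_powersetCard_sum_eq_choose_smul {α M : Type*} [DecidableEq α] [AddCommMonoid M]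
    (s : Finset α) (k : ℕ) (a : α → M) :
    ∑ K ∈ s.powersetCard (k + 1), ∑ i ∈ K, a i = (#s - 1).choose k • ∑ i ∈ s, a i := by
  rw [sum_comm' (t' := s) (s' := fun i => (s.powersetCard (k + 1)).filter (i ∈ ·))]
  · rw [smul_sum]
    refine sum_congr rfl fun i hi => ?_
    rw [sum_const]
    congr 1
    simpa using card_filter_powersetCard_subset {i} s (k + 1) (by simpa using hi) (by simp)
  · intro K i
    simp only [mem_filter, mem_powersetCard]
    exact ⟨fun ⟨hK, hi⟩ => ⟨⟨hK, hi⟩, hK.1 hi⟩, fun h => h.1⟩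

namespace Matrix

variable {ι : Type*} [DecidableEq ι]

def principalMinorSum [Fintype ι] {R : Type*} [CommRing R] (k : ℕ) (A : Matrix ι ι R) : R :=
  ∑ K ∈ univ.powersetCard k, (A.submatrix (Subtype.val : K → ι) Subtype.val).det

theorem principalMinorSum_smul_one [Fintype ι] {R : Type*} [CommRing R] (k : ℕ) (c : R) :
    principalMinorSum k (c • 1 : Matrix ι ι R) = (Fintype.card ι).choose k * c ^ k := by
  have hminor : ∀ K ∈ univ.powersetCard k,
      ((c • 1 : Matrix ι ι R).submatrix (Subtype.val : K → ι) Subtype.val).det = c ^ k := by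
    intro K hK
    rw [submatrix_smul, Pi.smul_apply, Pi.smul_apply, submatrix_one _ Subtype.val_injective,
      det_smul, det_one, mul_one, Fintype.card_coe, (mem_powersetCard.1 hK).2]
  rw [principalMinorSum, sum_congr rfl hminor, sum_const, card_powersetCard, card_univ,
    nsmul_eq_mul]

theorem IsDiag.prod_erase_perm_eq_zero [Fintype ι] {R : Type*} [CommRing R] {A : Matrix ι ι R}
    (hA : A.IsDiag) {σ : Equiv.Perm ι} (hσ : σ ≠ 1) (i : ι) :
    ∏ j ∈ univ.erase i, A (σ j) j = 0 := by
  obtain ⟨j, hj, hji⟩ := exists_mem_ne (Equiv.Perm.one_lt_card_support_of_ne_one hσ) i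
  exact prod_eq_zero (mem_erase.2 ⟨hji, mem_univ j⟩) (hA (Equiv.Perm.mem_support.1 hj))

section Derivative

variable {𝕜 E : Type*} [NontriviallyNormedField 𝕜] [NormedAddCommGroup E] [NormedSpace 𝕜 E]
  {A : E → Matrix ι ι 𝕜} {A' : ι → ι → E →L[𝕜] 𝕜} {x : E} {c : 𝕜}

/-- Jacobi's formula at a scalar matrix. -/
theorem hasFDerivAt_det_of_eq_smul_one [Fintype ι]
    (hA : ∀ i j, HasFDerivAt (fun y => A y i j) (A' i j) x) (hAx : A x = c • 1) :
    HasFDerivAt (fun y => (A y).det) (c ^ (Fintype.card ι - 1) • ∑ i, A' i i) x := by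
  simp_rw [det_apply']
  refine (HasFDerivAt.fun_sum fun σ (_ : σ ∈ univ) =>
    (HasFDerivAt.finsetProd fun i (_ : i ∈ univ) => hA (σ i) i).const_mul
      ((Equiv.Perm.sign σ : ℤ) : 𝕜)).congr_fderiv ?_
  have hdiag : (A x).IsDiag := hAx ▸ isDiag_one.smul c
  rw [sum_eq_single (1 : Equiv.Perm ι) (fun σ _ hσ => by
    simp only [hdiag.prod_erase_perm_eq_zero hσ]
    exact smul_eq_zero_of_right _ (sum_eq_zero fun j _ => zero_smul 𝕜 _)) (by simp)]
  simp [hAx, smul_sum, card_erase_of_mem]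

theorem hasFDerivAt_det_submatrix_of_eq_smul_one
    (hA : ∀ i j, HasFDerivAt (fun y => A y i j) (A' i j) x) (hAx : A x = c • 1) (K : Finset ι) :
    HasFDerivAt (fun y => ((A y).submatrix (Subtype.val : K → ι) Subtype.val).det)
      (c ^ (#K - 1) • ∑ i ∈ K, A' i i) x := by
  have hsub := hasFDerivAt_det_of_eq_smul_one (c := c)
    (A := fun y => (A y).submatrix (Subtype.val : K → ι) Subtype.val) (A' := fun i j => A' i j)
    (fun i j => hA i j)
    (by rw [hAx]; exact congrArg (c • ·) (submatrix_one (α := 𝕜) _ Subtype.val_injective))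
  rwa [Fintype.card_coe, sum_coe_sort K (fun i => A' i i)] at hsub

theorem hasFDerivAt_principalMinorSum_of_eq_smul_one [Fintype ι]
    (hA : ∀ i j, HasFDerivAt (fun y => A y i j) (A' i j) x) (hAx : A x = c • 1) (k : ℕ) :
    HasFDerivAt (fun y => principalMinorSum (k + 1) (A y))
      ((((Fintype.card ι - 1).choose k : 𝕜) * c ^ k) • ∑ i, A' i i) x := by
  refine (HasFDerivAt.fun_sum fun K (_ : K ∈ univ.powersetCard (k + 1)) =>
    hasFDerivAt_det_submatrix_of_eq_smul_one hA hAx K).congr_fderiv ?_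
  rw [sum_congr rfl fun K hK => by rw [(mem_powersetCard.1 hK).2, add_tsub_cancel_right],
    ← smul_sum, sum_powersetCard_sum_eq_choose_smul, card_univ, mul_comm, mul_smul]
  exact congrArg (c ^ k • ·) (Nat.cast_smul_eq_nsmul 𝕜 _ _).symm

end Derivative

end Matrix

theorem hasFDerivAt_const_add_mul_sum_mul_sub {𝕜 ι κ : Type*} [NontriviallyNormedField 𝕜]
    [Fintype ι] [Fintype κ] (a b : 𝕜) (p : κ → 𝕜) (g x : ι → κ → 𝕜) (j : ι) :
    HasFDerivAt (fun q : ι → κ → 𝕜 => a + b * ∑ α, p α * (q j α - g j α))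
      (b • ∑ α, p α • (ContinuousLinearMap.proj α ∘L
        (ContinuousLinearMap.proj j : (ι → κ → 𝕜) →L[𝕜] κ → 𝕜))) x :=
  ((HasFDerivAt.fun_sum fun α _ =>
    (((ContinuousLinearMap.proj α ∘L
        (ContinuousLinearMap.proj j : (ι → κ → 𝕜) →L[𝕜] κ → 𝕜)).hasFDerivAt).sub_const
      (g j α)).const_mul (p α)).const_mul b).const_add a

/-- The Weierstrass-type function
`E(q) = f(q) - (1/(C(n,k) f̂^{k-1})) Σ_{|K|=k} det (f̂ I + (n/k) p̂ (q - g))_K`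
vanishes at `q = g` together with all its first partial derivatives. -/
theorem weierstrass_function_first_order (n ν k : ℕ) (hk1 : 1 ≤ k) (hkn : k ≤ n)
    (f : (Fin n → Fin ν → ℝ) → ℝ) (hf : Differentiable ℝ f)
    (g : Fin n → Fin ν → ℝ)
    (fhat : ℝ) (hfhat : fhat = f g) (hne : fhat ≠ 0)
    (phat : Fin n → Fin ν → ℝ)
    (hphat : ∀ i α, phat i α = fderiv ℝ f g (Pi.single i (Pi.single α 1)))
    (M : (Fin n → Fin ν → ℝ) → Matrix (Fin n) (Fin n) ℝ)
    (hM : ∀ q i j, M q i j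
      = fhat * (if i = j then 1 else 0)
        + ((n : ℝ) / (k : ℝ)) * ∑ α, phat i α * (q j α - g j α))
    (E : (Fin n → Fin ν → ℝ) → ℝ)
    (hE : ∀ q, E q
      = f q - (1 / ((n.choose k : ℝ) * fhat ^ (k - 1))) *
          ∑ K ∈ Finset.univ.powersetCard k,
            ((M q).submatrix (fun i : {x : Fin n // x ∈ K} => (i : Fin n))
              (fun j : {x : Fin n // x ∈ K} => (j : Fin n))).det) :
    E g = 0 ∧ ∀ i α, fderiv ℝ E g (Pi.single i (Pi.single α 1)) = 0 := by
  obtain ⟨k, rfl⟩ : ∃ m, k = m + 1 := ⟨k - 1, by omega⟩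
  have hE : ∀ q, E q = f q - (1 / ((n.choose (k + 1) : ℝ) * fhat ^ k)) *
      Matrix.principalMinorSum (k + 1) (M q) := hE
  have hMg : M g = fhat • 1 := by
    ext i j; simp [hM, Matrix.one_apply]
  set L : Fin n → Fin n → (Fin n → Fin ν → ℝ) →L[ℝ] ℝ := fun i j =>
    ((n : ℝ) / (k + 1 : ℕ)) • ∑ α, phat i α • (ContinuousLinearMap.proj α ∘L
      (ContinuousLinearMap.proj j : (Fin n → Fin ν → ℝ) →L[ℝ] Fin ν → ℝ))
  have hentry : ∀ i j, HasFDerivAt (fun q => M q i j) (L i j) g := fun i j => by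
    simpa only [hM] using hasFDerivAt_const_add_mul_sum_mul_sub
      (fhat * (if i = j then 1 else 0)) ((n : ℝ) / (k + 1 : ℕ)) (phat i) g g j
  have hE' := ((hf g).hasFDerivAt.sub (((Matrix.hasFDerivAt_principalMinorSum_of_eq_smul_one
    hentry hMg k).const_mul _))).congr_of_eventuallyEq (Filter.Eventually.of_forall hE)
  have hC : (n.choose (k + 1) : ℝ) ≠ 0 := Nat.cast_ne_zero.2 (Nat.choose_pos hkn).ne'
  refine ⟨?_, fun i α => ?_⟩
  · rw [hE, hMg, Matrix.principalMinorSum_smul_one, Fintype.card_fin, ← hfhat]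
    field_simp
    ring
  · have hchoose : ((n - 1).choose k : ℝ) * n = n.choose (k + 1) * (k + 1) := by
      obtain ⟨m, rfl⟩ : ∃ m, n = m + 1 := ⟨n - 1, by omega⟩
      simpa [mul_comm] using congrArg (Nat.cast (R := ℝ)) (Nat.add_one_mul_choose_eq m k)
    have htrace : (∑ j, L j j) (Pi.single i (Pi.single α 1)) = n / (k + 1 : ℕ) * phat i α := by
      simp [L, Pi.single_apply, ite_apply, mul_ite]
    rw [hE'.fderiv]
    simp only [sub_apply, smul_apply, htrace, Fintype.card_fin, smul_eq_mul, ← hphat]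
    push_cast
    field_simp
    linear_combination -phat i α * hchoose
end

section
/- Let E be the Weierstrass-type function of the previous statement. Its Hessian at q = g equals ∂²E/∂q^λ_l ∂q^μ_m (g) = ∂²f/∂q^λ_l ∂q^μ_m (g) - (n(k-1))/(k(n-1) f̂) · (p̂^l_λ p̂^m_μ - p̂^l_μ p̂^m_λ) for l ≠ m (and equals the Hessian of f for l = m), where the correction term is a skew form vanishing on rank-one matrices; hence the Hessian of E and the Hessian of f agree as quadratic forms on rank-one matrices q^α_i = ξ^α η_i. -/
/-!
On the plane `g + t e_{lλ} + s e_{mμ}` the matrix `f̂ I + (n/k) p̂ (q - g)` is `f̂ I` plus two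
rank-one terms living in the columns `l` and `m`. By the matrix determinant lemma every principal
`k × k` minor is then `f̂^(k-2) ((f̂ + t a) (f̂ + s b) - t s a' b')`, bilinear in `(t, s)`, and the
mixed second derivative is its `t s` coefficient `f̂^(k-2) (n/k)^2 (p̂^l_λ p̂^m_μ - p̂^l_μ p̂^m_λ)`
when `l, m ∈ K` (and `0` otherwise). Summing over the `C(n-2, k-2)` sets `K ⊇ {l, m}` and dividing
by `C(n, k) f̂^(k-1)` yields the coefficient `n(k-1)/(k(n-1) f̂)`. The correction is antisymmetric
under `λ ↔ μ`, hence vanishes on rank-one matrices `ξ^α η_i`.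
-/

open Finset Matrix

variable {𝕜 ι κ V F : Type*}

section SecondDerivative

variable [NontriviallyNormedField 𝕜] [NormedAddCommGroup V] [NormedSpace 𝕜 V]

theorem fderiv_fderiv_apply_eq_lineDeriv_lineDeriv [NormedAddCommGroup F] [NormedSpace 𝕜 F]
    {D : V → F} (hD : ContDiff 𝕜 2 D) (x u v : V) :
    fderiv 𝕜 (fun y => fderiv 𝕜 D y v) x u = lineDeriv 𝕜 (fun y => lineDeriv 𝕜 D y v) x u := by
  have hD' : (fun y => fderiv 𝕜 D y v) = fun y => lineDeriv 𝕜 D y v :=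
    funext fun y => ((hD.differentiable (by norm_num)) y).lineDeriv_eq_fderiv.symm
  have hdiff : DifferentiableAt 𝕜 (fun y => fderiv 𝕜 D y v) x :=
    ((hD.fderiv_right (m := 1) (by norm_num)).differentiable (by norm_num) x).clm_apply
      (differentiableAt_const v)
  rw [← hdiff.lineDeriv_eq_fderiv, hD']

theorem lineDeriv_lineDeriv_eq_of_eq_bilinear {D : V → 𝕜} {x u v : V} {a b c d : 𝕜}
    (h : ∀ t s : 𝕜, D (x + t • u + s • v) = a + b * t + c * s + d * (t * s)) :
    lineDeriv 𝕜 (fun y => lineDeriv 𝕜 D y v) x u = d := by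
  have hinner : ∀ t : 𝕜, lineDeriv 𝕜 D (x + t • u) v = c + d * t := by
    intro t
    simp only [lineDeriv, h]
    apply HasDerivAt.deriv
    convert ((hasDerivAt_id (0 : 𝕜)).const_mul (c + d * t)).const_add (a + b * t) using 1
    · ext s; simp only [id_eq]; ring
    · simp
  simp only [lineDeriv] at hinner ⊢
  simp only [hinner]
  apply HasDerivAt.deriv
  convert ((hasDerivAt_id (0 : 𝕜)).const_mul d).const_add c using 1 <;> simp

theorem fderiv_fderiv_sub_const_mul {f D : V → 𝕜} (hf : ContDiff 𝕜 2 f) (hD : ContDiff 𝕜 2 D)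
    (r : 𝕜) (x u v : V) :
    fderiv 𝕜 (fun y => fderiv 𝕜 (fun q => f q - r * D q) y v) x u =
      fderiv 𝕜 (fun y => fderiv 𝕜 f y v) x u - r * fderiv 𝕜 (fun y => fderiv 𝕜 D y v) x u := by
  have hdiff : ∀ {φ : V → 𝕜}, ContDiff 𝕜 2 φ → DifferentiableAt 𝕜 (fun y => fderiv 𝕜 φ y v) x :=
    fun hφ => ((hφ.fderiv_right (m := 1) (by norm_num)).differentiable (by norm_num) x).clm_apply
      (differentiableAt_const v)
  have hfirst : (fun y => fderiv 𝕜 (fun q => f q - r * D q) y v) =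
      fun y => fderiv 𝕜 f y v - r * fderiv 𝕜 D y v := by
    ext y
    have hDy := (hD.differentiable (by norm_num)) y
    rw [fderiv_fun_sub ((hf.differentiable (by norm_num)) y) (hDy.const_mul r),
      fderiv_const_mul hDy]
    simp
  rw [hfirst, fderiv_fun_sub (hdiff hf) ((hdiff hD).const_mul r), fderiv_const_mul (hdiff hD)]
  simp

theorem ContDiff.matrix_det [Fintype ι] [DecidableEq ι] {n : WithTop ℕ∞} {A : V → Matrix ι ι 𝕜}
    (hA : ∀ i j, ContDiff 𝕜 n fun x => A x i j) : ContDiff 𝕜 n fun x => (A x).det := by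
  simp only [det_apply, Units.smul_def, zsmul_eq_mul]
  exact ContDiff.sum fun _ _ => contDiff_const.mul (contDiff_prod fun _ _ => hA _ _)

end SecondDerivative

theorem Matrix.det_smul_one_add_vecMulVec_add_vecMulVec [Field 𝕜] [Fintype ι] [DecidableEq ι]
    {c : 𝕜} (hc : c ≠ 0) (hι : 2 ≤ Fintype.card ι) (a b x y : ι → 𝕜) :
    (c • (1 : Matrix ι ι 𝕜) + vecMulVec a x + vecMulVec b y).det =
      c ^ (Fintype.card ι - 2) * ((c + x ⬝ᵥ a) * (c + y ⬝ᵥ b) - (x ⬝ᵥ b) * (y ⬝ᵥ a)) := by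
  set U : Matrix ι (Fin 2) 𝕜 := of fun i k => ![a i, b i] k
  set W : Matrix (Fin 2) ι 𝕜 := of fun k j => ![x j, y j] k
  have hUW : vecMulVec a x + vecMulVec b y = U * W := by
    ext i j; simp [U, W, vecMulVec_apply, mul_apply, Fin.sum_univ_two]
  have hWU : W * U = !![x ⬝ᵥ a, x ⬝ᵥ b; y ⬝ᵥ a, y ⬝ᵥ b] := by
    ext k k'; fin_cases k <;> fin_cases k' <;> rfl
  have hinv : (c • (1 : Matrix ι ι 𝕜))⁻¹ = c⁻¹ • 1 :=
    inv_eq_left_inv (by rw [smul_mul_smul, inv_mul_cancel₀ hc, one_mul, one_smul])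
  rw [add_assoc, hUW, det_add_mul _ _ (by simp [hc]), hinv, Matrix.mul_smul, Matrix.mul_one,
    Matrix.smul_mul, hWU, det_smul, det_one, one_fin_two, smul_of, of_add_of]
  simp only [smul_cons, smul_eq_mul, Matrix.smul_empty, cons_add_cons, empty_add_empty,
    det_fin_two_of]
  obtain ⟨m, hm⟩ := Nat.exists_eq_add_of_le hι
  rw [hm, Nat.add_sub_cancel_left, pow_add]
  field_simp
  ring

theorem dotProduct_single_comp_val [CommRing 𝕜] [DecidableEq ι] (K : Finset ι) (l : ι)
    (a : ι → 𝕜) :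
    ((fun j : K => (Pi.single l 1 : ι → 𝕜) j) ⬝ᵥ fun j : K => a j) =
      if l ∈ K then a l else 0 := by
  simp only [dotProduct]
  rw [Finset.sum_coe_sort K (fun j => (Pi.single l 1 : ι → 𝕜) j * a j)]
  simp [Pi.single_apply]

theorem Matrix.det_submatrix_smul_one_add_vecMulVec_single [Field 𝕜] [DecidableEq ι] {c : 𝕜}
    (hc : c ≠ 0) {K : Finset ι} (hK : 2 ≤ #K) (a b : ι → 𝕜) (l m : ι) :
    ((c • 1 + vecMulVec a (Pi.single l 1) + vecMulVec b (Pi.single m 1)).submatrix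
        (Subtype.val : K → ι) Subtype.val).det =
      c ^ (#K - 2) * ((c + if l ∈ K then a l else 0) * (c + if m ∈ K then b m else 0) -
        (if l ∈ K then b l else 0) * (if m ∈ K then a m else 0)) := by
  have hsub : (c • 1 + vecMulVec a (Pi.single l 1) + vecMulVec b (Pi.single m 1)).submatrix
        (Subtype.val : K → ι) Subtype.val =
      c • 1 + vecMulVec (fun i : K => a i) (fun j : K => (Pi.single l 1 : ι → 𝕜) j) +
        vecMulVec (fun i : K => b i) (fun j : K => (Pi.single m 1 : ι → 𝕜) j) := by
    ext i j
    simp only [submatrix_apply, Matrix.add_apply, Matrix.smul_apply, vecMulVec_apply, one_apply,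
      Subtype.ext_iff]
  rw [hsub, det_smul_one_add_vecMulVec_add_vecMulVec hc (by simpa using hK), Fintype.card_coe]
  simp only [dotProduct_single_comp_val]

def Matrix.principalMinorSum_s17 [CommRing 𝕜] [Fintype ι] [DecidableEq ι] (k : ℕ)
    (A : Matrix ι ι 𝕜) : 𝕜 :=
  ∑ K ∈ univ.powersetCard k, (A.submatrix (Subtype.val : K → ι) Subtype.val).det

theorem ContDiff.principalMinorSum_s17 [NontriviallyNormedField 𝕜] [NormedAddCommGroup V]
    [NormedSpace 𝕜 V] [Fintype ι] [DecidableEq ι] {n : WithTop ℕ∞} {A : V → Matrix ι ι 𝕜}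
    (hA : ∀ i j, ContDiff 𝕜 n fun x => A x i j) (k : ℕ) :
    ContDiff 𝕜 n fun x => (A x).principalMinorSum_s17 k :=
  ContDiff.sum fun _ _ => ContDiff.matrix_det fun _ _ => hA _ _

theorem Matrix.exists_principalMinorSum_smul_one_add_vecMulVec_single_eq [Field 𝕜] [Fintype ι]
    [DecidableEq ι] {c : 𝕜} (hc : c ≠ 0) {k : ℕ} (hk : 2 ≤ k) (a b : ι → 𝕜) (l m : ι) :
    ∃ α β γ : 𝕜, ∀ t s : 𝕜,
      (c • 1 + vecMulVec (t • a) (Pi.single l 1) +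
          vecMulVec (s • b) (Pi.single m 1)).principalMinorSum_s17 k =
        α + β * t + γ * s + #{K ∈ univ.powersetCard k | {l, m} ⊆ K} *
          (c ^ (k - 2) * (a l * b m - b l * a m)) * (t * s) := by
  set d := c ^ (k - 2) * (a l * b m - b l * a m)
  refine ⟨∑ _K ∈ (univ : Finset ι).powersetCard k, c ^ (k - 2) * c ^ 2,
    ∑ K ∈ univ.powersetCard k, c ^ (k - 2) * c * (if l ∈ K then a l else 0),
    ∑ K ∈ univ.powersetCard k, c ^ (k - 2) * c * (if m ∈ K then b m else 0), fun t s => ?_⟩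
  have hminor : ∀ K ∈ univ.powersetCard k,
      ((c • 1 + vecMulVec (t • a) (Pi.single l 1) + vecMulVec (s • b) (Pi.single m 1)).submatrix
        (Subtype.val : K → ι) Subtype.val).det =
      c ^ (k - 2) * c ^ 2 + c ^ (k - 2) * c * (if l ∈ K then a l else 0) * t +
        c ^ (k - 2) * c * (if m ∈ K then b m else 0) * s +
          (if {l, m} ⊆ K then d else 0) * (t * s) := by
    intro K hK
    rw [mem_powersetCard] at hK
    rw [det_submatrix_smul_one_add_vecMulVec_single hc (hK.2 ▸ hk), hK.2]
    by_cases hl : l ∈ K <;> by_cases hm : m ∈ K <;>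
      simp only [hl, hm, insert_subset_iff, singleton_subset_iff, and_self, and_false, false_and,
        if_true, if_false, Pi.smul_apply, smul_eq_mul, d] <;> ring
  rw [principalMinorSum_s17, sum_congr rfl hminor]
  simp only [sum_add_distrib, ← sum_mul, ← sum_filter, sum_const, nsmul_eq_mul]

theorem card_filter_powersetCard_pair_subset [Fintype ι] [DecidableEq ι] {l m : ι} (hlm : l ≠ m)
    {k : ℕ} (hk : 2 ≤ k) :
    #{K ∈ (univ : Finset ι).powersetCard k | {l, m} ⊆ K} =
      (Fintype.card ι - 2).choose (k - 2) := by
  rw [card_filter_powersetCard_subset _ _ _ (subset_univ _) (by rw [card_pair hlm]; exact hk),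
    card_pair hlm, card_univ]

def weierstrassMatrix [CommRing 𝕜] [DecidableEq ι] [Fintype κ] (fhat c : 𝕜) (p g q : ι → κ → 𝕜) :
    Matrix ι ι 𝕜 :=
  of fun i j => fhat * (if i = j then 1 else 0) + c * ∑ α, p i α * (q j α - g j α)

theorem weierstrassMatrix_add_smul_single_add_smul_single [CommRing 𝕜] [Fintype κ]
    [DecidableEq ι] [DecidableEq κ] (fhat c : 𝕜) (p g : ι → κ → 𝕜) (l m : ι) (lam mu : κ)
    (t s : 𝕜) :
    weierstrassMatrix fhat c p g (g + t • (Pi.single l (Pi.single lam 1) : ι → κ → 𝕜) +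
        s • (Pi.single m (Pi.single mu 1) : ι → κ → 𝕜)) =
      fhat • 1 + vecMulVec (t • fun i => c * p i lam) (Pi.single l 1) +
        vecMulVec (s • fun i => c * p i mu) (Pi.single m 1) := by
  ext i j
  have hdiff : ∀ α, (g + t • (Pi.single l (Pi.single lam 1) : ι → κ → 𝕜) +
      s • (Pi.single m (Pi.single mu 1) : ι → κ → 𝕜)) j α - g j α =
      t * (Pi.single l (Pi.single lam 1) : ι → κ → 𝕜) j α +
        s * (Pi.single m (Pi.single mu 1) : ι → κ → 𝕜) j α := by
    intro α; simp only [Pi.add_apply, Pi.smul_apply, smul_eq_mul]; ring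
  simp only [weierstrassMatrix, of_apply, hdiff, mul_add, sum_add_distrib]
  obtain rfl | hjl := eq_or_ne j l <;> obtain rfl | hjm := eq_or_ne j m <;>
    simp only [*, Matrix.add_apply, Matrix.smul_apply, smul_vecMulVec, vecMulVec_apply,
      one_apply, Pi.single_apply, mul_ite, mul_one, mul_zero, Pi.zero_apply, sum_const_zero,
      sum_ite_eq', mem_univ, if_true, if_false, smul_eq_mul, add_zero] <;> ring

theorem contDiff_weierstrassMatrix_apply [NontriviallyNormedField 𝕜] [Fintype ι] [DecidableEq ι]
    [Fintype κ]
    {n : WithTop ℕ∞} (fhat c : 𝕜) (p g : ι → κ → 𝕜) (i j : ι) :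
    ContDiff 𝕜 n fun q => weierstrassMatrix fhat c p g q i j := by
  simp only [weierstrassMatrix, of_apply]
  fun_prop

theorem fderiv_fderiv_principalMinorSum_weierstrassMatrix [NontriviallyNormedField 𝕜]
    [Fintype ι] [DecidableEq ι] [Fintype κ] [DecidableEq κ] {fhat : 𝕜} (hfhat : fhat ≠ 0)
    {k : ℕ} (hk : 2 ≤ k) (c : 𝕜) (p g : ι → κ → 𝕜) (l m : ι) (lam mu : κ) :
    fderiv 𝕜 (fun y => fderiv 𝕜 (fun q => (weierstrassMatrix fhat c p g q).principalMinorSum_s17 k) y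
        (Pi.single m (Pi.single mu 1))) g (Pi.single l (Pi.single lam 1)) =
      #{K ∈ univ.powersetCard k | {l, m} ⊆ K} *
        (fhat ^ (k - 2) * c ^ 2 * (p l lam * p m mu - p l mu * p m lam)) := by
  rw [fderiv_fderiv_apply_eq_lineDeriv_lineDeriv
    (ContDiff.principalMinorSum_s17 (contDiff_weierstrassMatrix_apply fhat c p g) k)]
  obtain ⟨α, β, γ, h⟩ := exists_principalMinorSum_smul_one_add_vecMulVec_single_eq hfhat hk
    (fun i => c * p i lam) (fun i => c * p i mu) l m
  refine lineDeriv_lineDeriv_eq_of_eq_bilinear (a := α) (b := β) (c := γ) fun t s => ?_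
  rw [weierstrassMatrix_add_smul_single_add_smul_single, h]
  ring

theorem Nat.cast_choose_sub_two_mul_sq_div_cast_choose [Field 𝕜] [CharZero 𝕜] {n k : ℕ}
    (hk : 2 ≤ k) (hkn : k ≤ n) :
    ((n - 2).choose (k - 2) : 𝕜) * ((n : 𝕜) / k) ^ 2 / n.choose k =
      n * (k - 1) / (k * (n - 1)) := by
  have h := congrArg (Nat.cast : ℕ → 𝕜) (Nat.choose_mul (n := n) hk)
  push_cast [Nat.cast_choose_two] at h
  have hk0 : (k : 𝕜) ≠ 0 := by norm_cast; omega
  have hn1 : (n : 𝕜) - 1 ≠ 0 := by rw [sub_ne_zero]; norm_cast; omega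
  have hC : (n.choose k : 𝕜) ≠ 0 := by exact_mod_cast (Nat.choose_pos hkn).ne'
  field_simp at h ⊢
  linear_combination (-(n : 𝕜)) * h

theorem sum_skew_mul_rankOne_eq_zero [CommRing 𝕜] [Fintype ι] [Fintype κ] (p : ι → κ → 𝕜)
    (ξ : κ → 𝕜) (η : ι → 𝕜) :
    ∑ l, ∑ m, ∑ lam, ∑ mu,
      (p l lam * p m mu - p l mu * p m lam) * (ξ lam * η l) * (ξ mu * η m) = 0 := by
  simp only [sub_mul, sum_sub_distrib, sub_eq_zero]
  refine sum_congr rfl fun l _ => sum_congr rfl fun m _ => ?_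
  rw [sum_comm]
  exact sum_congr rfl fun _ _ => sum_congr rfl fun _ _ => by ring

theorem weierstrass_function_hessian_general (n ν k : ℕ) (hk2 : 2 ≤ k) (hkn : k ≤ n)
    (f : (Fin n → Fin ν → ℝ) → ℝ) (hf : ContDiff ℝ 2 f)
    (g : Fin n → Fin ν → ℝ)
    (fhat : ℝ) (hne : fhat ≠ 0)
    (phat : Fin n → Fin ν → ℝ)
    (M : (Fin n → Fin ν → ℝ) → Matrix (Fin n) (Fin n) ℝ)
    (hM : ∀ q i j, M q i j
      = fhat * (if i = j then 1 else 0)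
        + ((n : ℝ) / (k : ℝ)) * ∑ α, phat i α * (q j α - g j α))
    (E : (Fin n → Fin ν → ℝ) → ℝ)
    (hE : ∀ q, E q
      = f q - (1 / ((n.choose k : ℝ) * fhat ^ (k - 1))) *
          ∑ K ∈ Finset.univ.powersetCard k,
            ((M q).submatrix (fun i : {x : Fin n // x ∈ K} => (i : Fin n))
              (fun j : {x : Fin n // x ∈ K} => (j : Fin n))).det)
    (HessE HessF : Fin n → Fin ν → Fin n → Fin ν → ℝ)
    (hHessE : ∀ l lam m mu, HessE l lam m mu
      = fderiv ℝ (fun q => fderiv ℝ E q (Pi.single m (Pi.single mu 1))) g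
          (Pi.single l (Pi.single lam 1)))
    (hHessF : ∀ l lam m mu, HessF l lam m mu
      = fderiv ℝ (fun q => fderiv ℝ f q (Pi.single m (Pi.single mu 1))) g
          (Pi.single l (Pi.single lam 1))) :
    (∀ l m lam mu, l ≠ m → HessE l lam m mu
      = HessF l lam m mu
        - ((n : ℝ) * ((k : ℝ) - 1)) / ((k : ℝ) * ((n : ℝ) - 1) * fhat)
          * (phat l lam * phat m mu - phat l mu * phat m lam)) ∧
    (∀ l lam mu, HessE l lam l mu = HessF l lam l mu) ∧
    (∀ (ξ : Fin ν → ℝ) (η : Fin n → ℝ),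
      ∑ l, ∑ m, ∑ lam, ∑ mu, HessE l lam m mu * (ξ lam * η l) * (ξ mu * η m)
        = ∑ l, ∑ m, ∑ lam, ∑ mu, HessF l lam m mu * (ξ lam * η l) * (ξ mu * η m)) := by
  set s : ℝ := ((n : ℝ) * ((k : ℝ) - 1)) / ((k : ℝ) * ((n : ℝ) - 1) * fhat)
  have hEW : E = fun q => f q - 1 / ((n.choose k : ℝ) * fhat ^ (k - 1)) *
      (weierstrassMatrix fhat ((n : ℝ) / k) phat g q).principalMinorSum_s17 k := by
    ext q
    rw [hE, show M q = weierstrassMatrix fhat ((n : ℝ) / k) phat g q from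
      Matrix.ext fun i j => (hM q i j).trans rfl]
    rfl
  have hHess : ∀ l lam m mu, HessE l lam m mu =
      HessF l lam m mu - s * (phat l lam * phat m mu - phat l mu * phat m lam) := by
    intro l lam m mu
    rw [hHessE, hHessF, hEW, fderiv_fderiv_sub_const_mul hf
      (ContDiff.principalMinorSum_s17 (contDiff_weierstrassMatrix_apply _ _ _ _) k),
      fderiv_fderiv_principalMinorSum_weierstrassMatrix hne hk2]
    obtain rfl | hlm := eq_or_ne l m
    · ring
    rw [card_filter_powersetCard_pair_subset hlm hk2, Fintype.card_fin,
      show s = n * (k - 1) / (k * (n - 1)) / fhat from (div_div _ _ _).symm,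
      ← Nat.cast_choose_sub_two_mul_sq_div_cast_choose hk2 hkn,
      show k - 1 = k - 2 + 1 by omega, pow_succ]
    field_simp
  refine ⟨fun l m lam mu _ => hHess l lam m mu, fun l lam mu => by rw [hHess]; ring, fun ξ η => ?_⟩
  have hterm : ∀ l m lam mu, HessE l lam m mu * (ξ lam * η l) * (ξ mu * η m) =
      HessF l lam m mu * (ξ lam * η l) * (ξ mu * η m) - s *
        ((phat l lam * phat m mu - phat l mu * phat m lam) * (ξ lam * η l) * (ξ mu * η m)) := by
    intro l m lam mu
    rw [hHess]
    ring
  simp only [hterm, sum_sub_distrib, ← mul_sum, sum_skew_mul_rankOne_eq_zero, mul_zero, sub_zero]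

/-- The Hessian at `q = g` of the Weierstrass-type function `E` differs from the Hessian of `f`
by the skew term `-(n(k-1))/(k(n-1) f̂) (p̂^l_λ p̂^m_μ - p̂^l_μ p̂^m_λ)` for `l ≠ m`, agrees with
it for `l = m`, and hence the two Hessians agree as quadratic forms on rank-one matrices. -/
theorem weierstrass_function_hessian (n ν k : ℕ) (hk2 : 2 ≤ k) (hkn : k ≤ n) (hn2 : 2 ≤ n)
    (f : (Fin n → Fin ν → ℝ) → ℝ) (hf : ContDiff ℝ 2 f)
    (g : Fin n → Fin ν → ℝ)
    (fhat : ℝ) (hfhat : fhat = f g) (hne : fhat ≠ 0)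
    (phat : Fin n → Fin ν → ℝ)
    (hphat : ∀ i α, phat i α = fderiv ℝ f g (Pi.single i (Pi.single α 1)))
    (M : (Fin n → Fin ν → ℝ) → Matrix (Fin n) (Fin n) ℝ)
    (hM : ∀ q i j, M q i j
      = fhat * (if i = j then 1 else 0)
        + ((n : ℝ) / (k : ℝ)) * ∑ α, phat i α * (q j α - g j α))
    (E : (Fin n → Fin ν → ℝ) → ℝ)
    (hE : ∀ q, E q
      = f q - (1 / ((n.choose k : ℝ) * fhat ^ (k - 1))) *
          ∑ K ∈ Finset.univ.powersetCard k,
            ((M q).submatrix (fun i : {x : Fin n // x ∈ K} => (i : Fin n))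
              (fun j : {x : Fin n // x ∈ K} => (j : Fin n))).det)
    (HessE HessF : Fin n → Fin ν → Fin n → Fin ν → ℝ)
    (hHessE : ∀ l lam m mu, HessE l lam m mu
      = fderiv ℝ (fun q => fderiv ℝ E q (Pi.single m (Pi.single mu 1))) g
          (Pi.single l (Pi.single lam 1)))
    (hHessF : ∀ l lam m mu, HessF l lam m mu
      = fderiv ℝ (fun q => fderiv ℝ f q (Pi.single m (Pi.single mu 1))) g
          (Pi.single l (Pi.single lam 1))) :
    (∀ l m lam mu, l ≠ m → HessE l lam m mu
      = HessF l lam m mu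
        - ((n : ℝ) * ((k : ℝ) - 1)) / ((k : ℝ) * ((n : ℝ) - 1) * fhat)
          * (phat l lam * phat m mu - phat l mu * phat m lam)) ∧
    (∀ l lam mu, HessE l lam l mu = HessF l lam l mu) ∧
    (∀ (ξ : Fin ν → ℝ) (η : Fin n → ℝ),
      ∑ l, ∑ m, ∑ lam, ∑ mu, HessE l lam m mu * (ξ lam * η l) * (ξ mu * η m)
        = ∑ l, ∑ m, ∑ lam, ∑ mu, HessF l lam m mu * (ξ lam * η l) * (ξ mu * η m)) :=
  weierstrass_function_hessian_general n ν k hk2 hkn f hf g fhat hne phat M hM E hE HessE HessF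
    hHessE hHessF
end
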